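/- arXiv:1211.5661 — 7 statements merged into one kernel-verified Lean document; each statement's English description precedes it below -/
import Mathlib

section
/- The cross-ratio of any four distinct solutions of a Riccati equation is a constant. Precisely: if u1, u2, u3, u4 are pairwise distinct elements of a differential field extension of (F, δ), each satisfying u' + b1·u² + b2·u + b3 = 0 with b1, b2, b3 ∈ F, then the derivative of the cross-ratio ((u1−u3)(u2−u4)) / ((u2−u3)(u1−u4)) is zero. -/
/-- The cross-ratio of any four distinct solutions of a Riccati equation
`u' + b1*u^2 + b2*u + b3 = 0` (coefficients in a differential field `F`,
solutions in a differential field extension `E`) has derivative zero. -/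
theorem cross_ratio_of_riccati_solutions_is_constant
    {F E : Type*} [Field F] [Field E] [Algebra F E]
    (δ : E → E)
    (hadd : ∀ a b : E, δ (a + b) = δ a + δ b)
    (hmul : ∀ a b : E, δ (a * b) = a * δ b + δ a * b)
    (b1 b2 b3 : F) (u1 u2 u3 u4 : E)
    (h12 : u1 ≠ u2) (h13 : u1 ≠ u3) (h14 : u1 ≠ u4)
    (h23 : u2 ≠ u3) (h24 : u2 ≠ u4) (h34 : u3 ≠ u4)
    (hric : ∀ u ∈ ({u1, u2, u3, u4} : Set E),
      δ u + algebraMap F E b1 * u ^ 2 + algebraMap F E b2 * u + algebraMap F E b3 = 0) :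
    δ (((u1 - u3) * (u2 - u4)) / ((u2 - u3) * (u1 - u4))) = 0 := by
  set c1 := algebraMap F E b1
  set c2 := algebraMap F E b2
  set c3 := algebraMap F E b3
  have hd1 : δ u1 = -(c1 * u1 ^ 2 + c2 * u1 + c3) := by
    have := hric u1 (by simp); linear_combination this
  have hd2 : δ u2 = -(c1 * u2 ^ 2 + c2 * u2 + c3) := by
    have := hric u2 (by simp); linear_combination this
  have hd3 : δ u3 = -(c1 * u3 ^ 2 + c2 * u3 + c3) := by
    have := hric u3 (by simp); linear_combination this
  have hd4 : δ u4 = -(c1 * u4 ^ 2 + c2 * u4 + c3) := by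
    have := hric u4 (by simp); linear_combination this
  have hzero : δ 0 = 0 := by
    have := hadd 0 0; simp at this; linear_combination this
  have hneg : ∀ a : E, δ (-a) = -δ a := by
    intro a
    have := hadd a (-a); simp [hzero] at this; linear_combination -this
  have hsub : ∀ a b : E, δ (a - b) = δ a - δ b := by
    intro a b
    rw [sub_eq_add_neg, hadd, hneg]; ring
  set a := (u1 - u3) * (u2 - u4) with ha
  set b := (u2 - u3) * (u1 - u4) with hb
  have hbne : b ≠ 0 :=
    mul_ne_zero (sub_ne_zero.mpr h23) (sub_ne_zero.mpr h14)
  have hda : δ a = (u1 - u3) * (δ u2 - δ u4) + (δ u1 - δ u3) * (u2 - u4) := by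
    rw [ha, hmul, hsub, hsub]
  have hdb : δ b = (u2 - u3) * (δ u1 - δ u4) + (δ u2 - δ u3) * (u1 - u4) := by
    rw [hb, hmul, hsub, hsub]
  have key : δ a * b = a * δ b := by
    rw [hda, hdb, hd1, hd2, hd3, hd4, ha, hb]; ring
  have hab : a / b * b = a := div_mul_cancel₀ a hbne
  have h1 : δ a = a / b * δ b + δ (a / b) * b := by
    conv_lhs => rw [← hab]
    exact hmul _ _
  have h2 : δ (a / b) * (b * b) = δ a * b - a * δ b := by
    field_simp at h1 ⊢
    rw [h1]; ring
  have h3 : δ (a / b) * (b * b) = 0 := by rw [h2, key]; ring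
  exact (mul_eq_zero.mp h3).resolve_right (mul_ne_zero hbne hbne)
end

section
/- Suppose γ satisfies the Chazy equation γ''' = 6γγ'' − 9(γ')², and let ω₁, ω₂, ω₃ be functions (on an interval or domain) that for each τ are the three roots of ω³ + (3/2)γ(τ)ω² + (3/2)γ'(τ)ω + (1/4)γ''(τ) = 0, assumed pairwise distinct and differentiable. Then they satisfy the Darboux–Halphen system: ω₁' = −ω₁(ω₂+ω₃) + ω₂ω₃, ω₂' = −ω₂(ω₁+ω₃) + ω₁ω₃, ω₃' = −ω₃(ω₁+ω₂) + ω₁ω₂. -/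
/-- If `γ` satisfies the Chazy equation `γ''' = 6γγ'' − 9(γ')²` and `ω₁ ω₂ ω₃`
are differentiable functions which pointwise are the three (pairwise distinct)
roots of `ω³ + (3/2)γω² + (3/2)γ'ω + (1/4)γ'' = 0`, then they satisfy the
Darboux–Halphen system. -/
theorem chazy_roots_satisfy_darboux_halphen
    (γ ω₁ ω₂ ω₃ : ℝ → ℂ)
    (hγ : Differentiable ℝ γ)
    (hγ' : Differentiable ℝ (deriv γ))
    (hγ'' : Differentiable ℝ (deriv (deriv γ)))
    (hchazy : ∀ t, deriv (deriv (deriv γ)) t =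
      6 * γ t * deriv (deriv γ) t - 9 * (deriv γ t) ^ 2)
    (hω₁ : Differentiable ℝ ω₁) (hω₂ : Differentiable ℝ ω₂) (hω₃ : Differentiable ℝ ω₃)
    (hs1 : ∀ t, ω₁ t + ω₂ t + ω₃ t = -(3 / 2) * γ t)
    (hs2 : ∀ t, ω₁ t * ω₂ t + ω₁ t * ω₃ t + ω₂ t * ω₃ t = (3 / 2) * deriv γ t)
    (hs3 : ∀ t, ω₁ t * ω₂ t * ω₃ t = -(1 / 4) * deriv (deriv γ) t)
    (hdist : ∀ t, ω₁ t ≠ ω₂ t ∧ ω₁ t ≠ ω₃ t ∧ ω₂ t ≠ ω₃ t) :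
    ∀ t, deriv ω₁ t = -ω₁ t * (ω₂ t + ω₃ t) + ω₂ t * ω₃ t ∧
      deriv ω₂ t = -ω₂ t * (ω₁ t + ω₃ t) + ω₁ t * ω₃ t ∧
      deriv ω₃ t = -ω₃ t * (ω₁ t + ω₂ t) + ω₁ t * ω₂ t := by
  intro t
  have h1 := (hω₁ t).hasDerivAt
  have h2 := (hω₂ t).hasDerivAt
  have h3 := (hω₃ t).hasDerivAt
  have hg0 := (hγ t).hasDerivAt
  have hg1 := (hγ' t).hasDerivAt
  have hg2 := (hγ'' t).hasDerivAt
  set a := deriv ω₁ t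
  set b := deriv ω₂ t
  set c := deriv ω₃ t
  -- first differentiated identity
  have H1 : HasDerivAt (fun s => ω₁ s + ω₂ s + ω₃ s) (a + b + c) t := (h1.add h2).add h3
  have H1' : HasDerivAt (fun s => -(3 / 2 : ℂ) * γ s) (-(3 / 2) * deriv γ t) t :=
    hg0.const_mul _
  have heq1 : (fun s => ω₁ s + ω₂ s + ω₃ s) = fun s => -(3 / 2 : ℂ) * γ s := funext hs1
  rw [heq1] at H1
  have E1 : a + b + c = -(3 / 2) * deriv γ t := H1.unique H1'
  -- second differentiated identity
  have H2 : HasDerivAt (fun s => ω₁ s * ω₂ s + ω₁ s * ω₃ s + ω₂ s * ω₃ s)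
      (a * ω₂ t + ω₁ t * b + (a * ω₃ t + ω₁ t * c) + (b * ω₃ t + ω₂ t * c)) t :=
    ((h1.mul h2).add (h1.mul h3)).add (h2.mul h3)
  have H2' : HasDerivAt (fun s => (3 / 2 : ℂ) * deriv γ s) ((3 / 2) * deriv (deriv γ) t) t :=
    hg1.const_mul _
  have heq2 : (fun s => ω₁ s * ω₂ s + ω₁ s * ω₃ s + ω₂ s * ω₃ s)
      = fun s => (3 / 2 : ℂ) * deriv γ s := funext hs2
  rw [heq2] at H2
  have E2 : a * ω₂ t + ω₁ t * b + (a * ω₃ t + ω₁ t * c) + (b * ω₃ t + ω₂ t * c)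
      = (3 / 2) * deriv (deriv γ) t := H2.unique H2'
  -- third differentiated identity
  have H3 : HasDerivAt (fun s => ω₁ s * ω₂ s * ω₃ s)
      ((a * ω₂ t + ω₁ t * b) * ω₃ t + ω₁ t * ω₂ t * c) t := (h1.mul h2).mul h3
  have H3' : HasDerivAt (fun s => -(1 / 4 : ℂ) * deriv (deriv γ) s)
      (-(1 / 4) * deriv (deriv (deriv γ)) t) t := hg2.const_mul _
  have heq3 : (fun s => ω₁ s * ω₂ s * ω₃ s)
      = fun s => -(1 / 4 : ℂ) * deriv (deriv γ) s := funext hs3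
  rw [heq3] at H3
  have E3 : (a * ω₂ t + ω₁ t * b) * ω₃ t + ω₁ t * ω₂ t * c
      = -(1 / 4) * deriv (deriv (deriv γ)) t := H3.unique H3'
  rw [hchazy t] at E3
  -- eliminate γ and its derivatives using the symmetric-function identities
  have hg0e : γ t = -(2 / 3) * (ω₁ t + ω₂ t + ω₃ t) := by
    linear_combination (2/3 : ℂ) * hs1 t
  have hg1e : deriv γ t = (2 / 3) * (ω₁ t * ω₂ t + ω₁ t * ω₃ t + ω₂ t * ω₃ t) := by
    linear_combination (-2/3 : ℂ) * hs2 t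
  have hg2e : deriv (deriv γ) t = -4 * (ω₁ t * ω₂ t * ω₃ t) := by
    linear_combination (4 : ℂ) * hs3 t
  rw [hg1e] at E1
  rw [hg2e] at E2
  rw [hg0e, hg1e, hg2e] at E3
  -- the pairwise differences are nonzero
  obtain ⟨d12, d13, d23⟩ := hdist t
  have n12 : ω₁ t - ω₂ t ≠ 0 := sub_ne_zero.mpr d12
  have n13 : ω₁ t - ω₃ t ≠ 0 := sub_ne_zero.mpr d13
  have n23 : ω₂ t - ω₃ t ≠ 0 := sub_ne_zero.mpr d23
  refine ⟨?_, ?_, ?_⟩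
  · have key : (a - (-ω₁ t * (ω₂ t + ω₃ t) + ω₂ t * ω₃ t)) * ((ω₁ t - ω₂ t) * (ω₁ t - ω₃ t))
        = 0 := by
      linear_combination (ω₁ t) ^ 2 * E1 - ω₁ t * E2 + E3
    have := mul_ne_zero n12 n13
    have h0 : a - (-ω₁ t * (ω₂ t + ω₃ t) + ω₂ t * ω₃ t) = 0 :=
      (mul_eq_zero.mp key).resolve_right this
    exact sub_eq_zero.mp h0
  · have key : (b - (-ω₂ t * (ω₁ t + ω₃ t) + ω₁ t * ω₃ t)) * ((ω₂ t - ω₁ t) * (ω₂ t - ω₃ t))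
        = 0 := by
      linear_combination (ω₂ t) ^ 2 * E1 - ω₂ t * E2 + E3
    have n21 : ω₂ t - ω₁ t ≠ 0 := sub_ne_zero.mpr (Ne.symm d12)
    have := mul_ne_zero n21 n23
    have h0 : b - (-ω₂ t * (ω₁ t + ω₃ t) + ω₁ t * ω₃ t) = 0 :=
      (mul_eq_zero.mp key).resolve_right this
    exact sub_eq_zero.mp h0
  · have key : (c - (-ω₃ t * (ω₁ t + ω₂ t) + ω₁ t * ω₂ t)) * ((ω₃ t - ω₁ t) * (ω₃ t - ω₂ t))
        = 0 := by
      linear_combination (ω₃ t) ^ 2 * E1 - ω₃ t * E2 + E3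
    have n31 : ω₃ t - ω₁ t ≠ 0 := sub_ne_zero.mpr (Ne.symm d13)
    have n32 : ω₃ t - ω₂ t ≠ 0 := sub_ne_zero.mpr (Ne.symm d23)
    have := mul_ne_zero n31 n32
    have h0 : c - (-ω₃ t * (ω₁ t + ω₂ t) + ω₁ t * ω₂ t) = 0 :=
      (mul_eq_zero.mp key).resolve_right this
    exact sub_eq_zero.mp h0
end

section
/- Conversely, if ω₁, ω₂, ω₃ satisfy the Darboux–Halphen system ωᵢ' = −ωᵢ(ωⱼ+ω_k) + ωⱼω_k (for {i,j,k} = {1,2,3}), then the function γ := −(2/3)(ω₁+ω₂+ω₃) satisfies γ' = (2/3)(ω₁ω₂+ω₂ω₃+ω₃ω₁) and γ'' = −4ω₁ω₂ω₃, and γ satisfies the Chazy equation γ''' = 6γγ'' − 9(γ')². -/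
/-- If `ω₁ ω₂ ω₃` satisfy the Darboux–Halphen system, then
`γ := −(2/3)(ω₁+ω₂+ω₃)` satisfies `γ' = (2/3)(ω₁ω₂+ω₂ω₃+ω₃ω₁)`,
`γ'' = −4ω₁ω₂ω₃`, and the Chazy equation `γ''' = 6γγ'' − 9(γ')²`. -/
theorem darboux_halphen_gives_chazy
    (ω₁ ω₂ ω₃ : ℝ → ℂ)
    (hω₁ : Differentiable ℝ ω₁) (hω₂ : Differentiable ℝ ω₂) (hω₃ : Differentiable ℝ ω₃)
    (hdh1 : ∀ t, deriv ω₁ t = -ω₁ t * (ω₂ t + ω₃ t) + ω₂ t * ω₃ t)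
    (hdh2 : ∀ t, deriv ω₂ t = -ω₂ t * (ω₁ t + ω₃ t) + ω₁ t * ω₃ t)
    (hdh3 : ∀ t, deriv ω₃ t = -ω₃ t * (ω₁ t + ω₂ t) + ω₁ t * ω₂ t)
    (γ : ℝ → ℂ)
    (hγdef : γ = fun t => -(2 / 3) * (ω₁ t + ω₂ t + ω₃ t)) :
    (∀ t, deriv γ t = (2 / 3) * (ω₁ t * ω₂ t + ω₂ t * ω₃ t + ω₃ t * ω₁ t)) ∧
      (∀ t, deriv (deriv γ) t = -4 * (ω₁ t * ω₂ t * ω₃ t)) ∧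
      (∀ t, deriv (deriv (deriv γ)) t =
        6 * γ t * deriv (deriv γ) t - 9 * (deriv γ t) ^ 2) := by
  have hw1 : ∀ t, HasDerivAt ω₁ (-ω₁ t * (ω₂ t + ω₃ t) + ω₂ t * ω₃ t) t := by
    intro t; have := (hω₁ t).hasDerivAt; rwa [hdh1 t] at this
  have hw2 : ∀ t, HasDerivAt ω₂ (-ω₂ t * (ω₁ t + ω₃ t) + ω₁ t * ω₃ t) t := by
    intro t; have := (hω₂ t).hasDerivAt; rwa [hdh2 t] at this
  have hw3 : ∀ t, HasDerivAt ω₃ (-ω₃ t * (ω₁ t + ω₂ t) + ω₁ t * ω₂ t) t := by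
    intro t; have := (hω₃ t).hasDerivAt; rwa [hdh3 t] at this
  have hγ' : ∀ t, HasDerivAt γ
      ((2 / 3) * (ω₁ t * ω₂ t + ω₂ t * ω₃ t + ω₃ t * ω₁ t)) t := by
    intro t
    have h := (((hw1 t).add (hw2 t)).add (hw3 t)).const_mul (-(2 / 3) : ℂ)
    rw [hγdef]
    convert h using 1
    case e'_4 => rfl
    case e'_8 => funext y; simp only [Pi.add_apply, Pi.mul_apply]
    case e'_9 => ring
  have h1 : deriv γ = fun t => (2 / 3) * (ω₁ t * ω₂ t + ω₂ t * ω₃ t + ω₃ t * ω₁ t) :=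
    funext fun t => (hγ' t).deriv
  have hγ'' : ∀ t, HasDerivAt (deriv γ) (-4 * (ω₁ t * ω₂ t * ω₃ t)) t := by
    intro t
    have h := ((((hw1 t).mul (hw2 t)).add ((hw2 t).mul (hw3 t))).add
      ((hw3 t).mul (hw1 t))).const_mul ((2 / 3) : ℂ)
    rw [h1]
    convert h using 1
    case e'_4 => rfl
    case e'_8 => funext y; simp only [Pi.add_apply, Pi.mul_apply]
    case e'_9 => ring
  have h2 : deriv (deriv γ) = fun t => -4 * (ω₁ t * ω₂ t * ω₃ t) :=
    funext fun t => (hγ'' t).deriv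
  refine ⟨fun t => congrFun h1 t, fun t => congrFun h2 t, fun t => ?_⟩
  have hγ''' : HasDerivAt (deriv (deriv γ))
      ((-4 : ℂ) * ((-ω₁ t * (ω₂ t + ω₃ t) + ω₂ t * ω₃ t) * ω₂ t * ω₃ t
        + ω₁ t * (-ω₂ t * (ω₁ t + ω₃ t) + ω₁ t * ω₃ t) * ω₃ t
        + ω₁ t * ω₂ t * (-ω₃ t * (ω₁ t + ω₂ t) + ω₁ t * ω₂ t))) t := by
    have h := (((hw1 t).mul (hw2 t)).mul (hw3 t)).const_mul ((-4 : ℂ))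
    rw [h2]
    convert h using 1
    case e'_4 => rfl
    case e'_8 => funext y; simp only [Pi.add_apply, Pi.mul_apply]
    case e'_9 => simp only [Pi.mul_apply]; ring
  rw [hγ'''.deriv, congrFun h1 t, congrFun h2 t, hγdef]
  ring
end

section
/- The Darboux–Halphen system in the symmetric form d(X₁+X₂)/dt = X₁X₂, d(X₂+X₃)/dt = X₂X₃, d(X₃+X₁)/dt = X₃X₁ is transformed, under the substitutions x = (1/3)(X₁+X₂+X₃), y = (4/3)(X₁²+X₂²+X₃² − X₁X₂ − X₂X₃ − X₃X₁), z = (4/27)(2X₁−X₂−X₃)(2X₂−X₃−X₁)(2X₃−X₁−X₂), into the Ramanujan-type system x' = (1/2)x² − (1/24)y, y' = 2xy − 3z, z' = 3xz − (1/6)y². -/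
/-- The symmetric Darboux–Halphen system `d(Xᵢ+Xⱼ)/dt = XᵢXⱼ` transforms, under
`x = (1/3)(X₁+X₂+X₃)`, `y = (4/3)(X₁²+X₂²+X₃²−X₁X₂−X₂X₃−X₃X₁)`,
`z = (4/27)(2X₁−X₂−X₃)(2X₂−X₃−X₁)(2X₃−X₁−X₂)`, into the Ramanujan-type system
`x' = x²/2 − y/24`, `y' = 2xy − 3z`, `z' = 3xz − y²/6`. -/
theorem darboux_halphen_to_ramanujan
    (X₁ X₂ X₃ : ℝ → ℂ)
    (hX₁ : Differentiable ℝ X₁) (hX₂ : Differentiable ℝ X₂) (hX₃ : Differentiable ℝ X₃)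
    (h12 : ∀ t, deriv (fun s => X₁ s + X₂ s) t = X₁ t * X₂ t)
    (h23 : ∀ t, deriv (fun s => X₂ s + X₃ s) t = X₂ t * X₃ t)
    (h31 : ∀ t, deriv (fun s => X₃ s + X₁ s) t = X₃ t * X₁ t)
    (x y z : ℝ → ℂ)
    (hx : x = fun t => (1 / 3) * (X₁ t + X₂ t + X₃ t))
    (hy : y = fun t => (4 / 3) * (X₁ t ^ 2 + X₂ t ^ 2 + X₃ t ^ 2
      - X₁ t * X₂ t - X₂ t * X₃ t - X₃ t * X₁ t))
    (hz : z = fun t => (4 / 27) * (2 * X₁ t - X₂ t - X₃ t)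
      * (2 * X₂ t - X₃ t - X₁ t) * (2 * X₃ t - X₁ t - X₂ t)) :
    (∀ t, deriv x t = (1 / 2) * (x t) ^ 2 - (1 / 24) * y t) ∧
      (∀ t, deriv y t = 2 * x t * y t - 3 * z t) ∧
      (∀ t, deriv z t = 3 * x t * z t - (1 / 6) * (y t) ^ 2) := by
  have hsum : ∀ t, deriv X₁ t + deriv X₂ t = X₁ t * X₂ t ∧
      deriv X₂ t + deriv X₃ t = X₂ t * X₃ t ∧
      deriv X₃ t + deriv X₁ t = X₃ t * X₁ t := by
    intro t
    refine ⟨?_, ?_, ?_⟩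
    · rw [← h12 t]; exact (deriv_add (hX₁ t) (hX₂ t)).symm
    · rw [← h23 t]; exact (deriv_add (hX₂ t) (hX₃ t)).symm
    · rw [← h31 t]; exact (deriv_add (hX₃ t) (hX₁ t)).symm
  have hd₁ : ∀ t, HasDerivAt X₁
      ((X₁ t * X₂ t + X₃ t * X₁ t - X₂ t * X₃ t) / 2) t := by
    intro t
    have h := (hX₁ t).hasDerivAt
    obtain ⟨a, b, c⟩ := hsum t
    have : deriv X₁ t = (X₁ t * X₂ t + X₃ t * X₁ t - X₂ t * X₃ t) / 2 := by
      linear_combination a / 2 - b / 2 + c / 2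
    rwa [this] at h
  have hd₂ : ∀ t, HasDerivAt X₂
      ((X₁ t * X₂ t + X₂ t * X₃ t - X₃ t * X₁ t) / 2) t := by
    intro t
    have h := (hX₂ t).hasDerivAt
    obtain ⟨a, b, c⟩ := hsum t
    have : deriv X₂ t = (X₁ t * X₂ t + X₂ t * X₃ t - X₃ t * X₁ t) / 2 := by
      linear_combination a / 2 + b / 2 - c / 2
    rwa [this] at h
  have hd₃ : ∀ t, HasDerivAt X₃
      ((X₂ t * X₃ t + X₃ t * X₁ t - X₁ t * X₂ t) / 2) t := by
    intro t
    have h := (hX₃ t).hasDerivAt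
    obtain ⟨a, b, c⟩ := hsum t
    have : deriv X₃ t = (X₂ t * X₃ t + X₃ t * X₁ t - X₁ t * X₂ t) / 2 := by
      linear_combination -a / 2 + b / 2 + c / 2
    rwa [this] at h
  subst hx hy hz
  refine ⟨?_, ?_, ?_⟩
  · intro t
    have h := (((hd₁ t).add (hd₂ t)).add (hd₃ t)).const_mul (1 / 3 : ℂ)
    have h' : HasDerivAt (fun t => (1 / 3 : ℂ) * (X₁ t + X₂ t + X₃ t)) _ t := h
    rw [h'.deriv]; ring
  · intro t
    have sq₁ : HasDerivAt (fun t => X₁ t ^ 2)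
        ((X₁ t * X₂ t + X₃ t * X₁ t - X₂ t * X₃ t) / 2 * X₁ t
          + X₁ t * ((X₁ t * X₂ t + X₃ t * X₁ t - X₂ t * X₃ t) / 2)) t := by
      simpa [pow_two, Pi.mul_def] using (hd₁ t).mul (hd₁ t)
    have sq₂ : HasDerivAt (fun t => X₂ t ^ 2)
        ((X₁ t * X₂ t + X₂ t * X₃ t - X₃ t * X₁ t) / 2 * X₂ t
          + X₂ t * ((X₁ t * X₂ t + X₂ t * X₃ t - X₃ t * X₁ t) / 2)) t := by
      simpa [pow_two, Pi.mul_def] using (hd₂ t).mul (hd₂ t)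
    have sq₃ : HasDerivAt (fun t => X₃ t ^ 2)
        ((X₂ t * X₃ t + X₃ t * X₁ t - X₁ t * X₂ t) / 2 * X₃ t
          + X₃ t * ((X₂ t * X₃ t + X₃ t * X₁ t - X₁ t * X₂ t) / 2)) t := by
      simpa [pow_two, Pi.mul_def] using (hd₃ t).mul (hd₃ t)
    have p1 := sq₁.add sq₂
    have p2 := p1.add sq₃
    have p3 := p2.sub ((hd₁ t).mul (hd₂ t))
    have p4 := p3.sub ((hd₂ t).mul (hd₃ t))
    have p5 := p4.sub ((hd₃ t).mul (hd₁ t))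
    have h := p5.const_mul (4 / 3 : ℂ)
    have h' : HasDerivAt (fun t => (4 / 3 : ℂ) * (X₁ t ^ 2 + X₂ t ^ 2 + X₃ t ^ 2
      - X₁ t * X₂ t - X₂ t * X₃ t - X₃ t * X₁ t)) _ t := h
    rw [h'.deriv]; ring
  · intro t
    have e₁ := (((hd₁ t).const_mul (2 : ℂ)).sub (hd₂ t)).sub (hd₃ t)
    have e₂ := (((hd₂ t).const_mul (2 : ℂ)).sub (hd₃ t)).sub (hd₁ t)
    have e₃ := (((hd₃ t).const_mul (2 : ℂ)).sub (hd₁ t)).sub (hd₂ t)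
    have h := ((e₁.const_mul (4 / 27 : ℂ)).mul e₂).mul e₃
    have h' : HasDerivAt (fun t => (4 / 27 : ℂ) * (2 * X₁ t - X₂ t - X₃ t)
      * (2 * X₂ t - X₃ t - X₁ t) * (2 * X₃ t - X₁ t - X₂ t)) _ t := h
    rw [h'.deriv]; simp only [Pi.sub_apply, Pi.mul_apply]; ring
end

section
/- Let Φ(u) = uⁿ + n·a₁uⁿ⁻¹ + (n(n−1)/2)a₂uⁿ⁻² + ⋯ + aₙ satisfy X(Φ) = n(a₁ − u)Φ, where X = ∂/∂z + (q − u²)∂/∂u. Then the coefficients satisfy the recursion (n−k)a_{k+1} = n·a₁a_k − a_k' − k·a_{k−1}·q for 1 ≤ k ≤ n−1 (with a₀ = 1). In particular if a₁ and q lie in a differential subring L, then all aₖ ∈ L. -/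
open Polynomial

/-- The derivation `X = ∂/∂z + (q − u²)∂/∂u` on `K[u]`. -/
noncomputable def riccatiDer {K : Type*} [Field K] (δ : K → K) (q : K)
    (f : Polynomial K) : Polynomial K :=
  f.sum (fun k c => C (δ c) * X ^ k) + (C q - X ^ 2) * derivative f

/-- If `Φ(u) = Σ_{k=0}^n C(n,k) aₖ u^{n−k}` (with `a₀ = 1`) satisfies
`X(Φ) = n(a₁ − u)Φ`, then `(n−k)a_{k+1} = n a₁ aₖ − aₖ' − k a_{k−1} q` for
`1 ≤ k ≤ n−1`; in particular, if `a₁` and `q` lie in a differential subfield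
`L`, then all coefficients `aₖ` lie in `L`. -/
theorem riccati_minimal_polynomial_coefficient_recursion
    {K : Type*} [Field K] [CharZero K]
    (δ : K → K)
    (hadd : ∀ a b : K, δ (a + b) = δ a + δ b)
    (hmul : ∀ a b : K, δ (a * b) = a * δ b + δ a * b)
    (q : K) (n : ℕ) (hn : 1 ≤ n) (a : ℕ → K) (ha0 : a 0 = 1)
    (Φ : Polynomial K)
    (hΦ : Φ = ∑ k ∈ Finset.range (n + 1), C ((n.choose k : K) * a k) * X ^ (n - k))
    (hdar : riccatiDer δ q Φ = (C ((n : K) * a 1) - C (n : K) * X) * Φ) :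
    (∀ k : ℕ, 1 ≤ k → k ≤ n - 1 →
        ((n : K) - (k : K)) * a (k + 1)
          = (n : K) * a 1 * a k - δ (a k) - (k : K) * a (k - 1) * q) ∧
      (∀ L : Subfield K, (∀ x ∈ L, δ x ∈ L) → a 1 ∈ L → q ∈ L →
        ∀ k ≤ n, a k ∈ L) := by
  have hδ0 : δ 0 = 0 := by
    have h := hadd 0 0; simp at h; exact h
  have hδ1 : δ 1 = 0 := by
    have h := hmul 1 1; simp at h; exact h
  have hδnat : ∀ m : ℕ, δ (m : K) = 0 := by
    intro m
    induction m with
    | zero => simpa using hδ0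
    | succ m ih => push_cast; rw [hadd]; simp [ih, hδ1]
  have hδcmul : ∀ (m : ℕ) (x : K), δ ((m : K) * x) = (m : K) * δ x := by
    intro m x; rw [hmul, hδnat]; ring
  -- coefficients of Φ
  have hcoeff : ∀ j : ℕ, j ≤ n → Φ.coeff j = (n.choose (n - j) : K) * a (n - j) := by
    intro j hj
    rw [hΦ, Polynomial.finset_sum_coeff]
    rw [Finset.sum_eq_single (n - j)]
    · rw [Nat.sub_sub_self hj, Polynomial.coeff_C_mul, Polynomial.coeff_X_pow, if_pos rfl,
        mul_one]
    · intro k hk hne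
      simp only [Polynomial.coeff_C_mul, Polynomial.coeff_X_pow]
      rw [if_neg]
      · ring
      · intro h
        apply hne
        simp only [Finset.mem_range] at hk
        omega
    · intro h
      exact absurd (Finset.mem_range.mpr (by omega)) h
  -- coefficient of the coefficientwise-derivative part
  have hsum : ∀ (f : Polynomial K) (j : ℕ),
      (f.sum (fun k c => C (δ c) * X ^ k)).coeff j = δ (f.coeff j) := by
    intro f j
    rw [Polynomial.sum, Polynomial.finset_sum_coeff]
    simp only [Polynomial.coeff_C_mul, Polynomial.coeff_X_pow, mul_ite, mul_one, mul_zero]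
    rw [Finset.sum_ite_eq f.support j (fun k => δ (f.coeff k))]
    by_cases h : j ∈ f.support
    · simp [h]
    · simp [h, Polynomial.notMem_support_iff.mp h, hδ0]
  have hX2 : ∀ (g : Polynomial K) (j : ℕ),
      (X ^ 2 * derivative g).coeff (j + 1) = g.coeff j * (j : K) := by
    intro g j
    cases j with
    | zero => rw [mul_comm, Polynomial.coeff_mul_X_pow']; simp
    | succ j' =>
      rw [mul_comm, Polynomial.coeff_mul_X_pow', if_pos (by omega)]
      have h2 : j' + 1 + 1 - 2 = j' := by omega
      rw [h2, Polynomial.coeff_derivative]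
      push_cast; ring
  have hrec : ∀ k : ℕ, 1 ≤ k → k ≤ n - 1 →
      ((n : K) - (k : K)) * a (k + 1)
        = (n : K) * a 1 * a k - δ (a k) - (k : K) * a (k - 1) * q := by
    intro k hk1 hk2
    obtain ⟨j, hj⟩ : ∃ j, n = j + 1 + k := ⟨n - 1 - k, by omega⟩
    have hL : (riccatiDer δ q Φ).coeff (j + 1)
        = δ (Φ.coeff (j + 1)) + q * (Φ.coeff (j + 2) * ((j : K) + 2))
          - Φ.coeff j * (j : K) := by
      rw [riccatiDer, Polynomial.coeff_add, hsum, sub_mul, Polynomial.coeff_sub,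
        Polynomial.coeff_C_mul, Polynomial.coeff_derivative, hX2]
      push_cast; ring
    have hR : (((C ((n : K) * a 1) - C (n : K) * X) * Φ)).coeff (j + 1)
        = (n : K) * a 1 * Φ.coeff (j + 1) - (n : K) * Φ.coeff j := by
      rw [sub_mul, Polynomial.coeff_sub, Polynomial.coeff_C_mul,
        mul_assoc (C (n : K)) X Φ, Polynomial.coeff_C_mul, Polynomial.coeff_X_mul]
    have E : δ (Φ.coeff (j + 1)) + q * (Φ.coeff (j + 2) * ((j : K) + 2))
          - Φ.coeff j * (j : K)
        = (n : K) * a 1 * Φ.coeff (j + 1) - (n : K) * Φ.coeff j := by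
      rw [← hL, ← hR, hdar]
    have hc1 : Φ.coeff (j + 1) = (n.choose k : K) * a k := by
      have := hcoeff (j + 1) (by omega)
      rwa [show n - (j + 1) = k by omega] at this
    have hc2 : Φ.coeff (j + 2) = (n.choose (k - 1) : K) * a (k - 1) := by
      have := hcoeff (j + 2) (by omega)
      rwa [show n - (j + 2) = k - 1 by omega] at this
    have hc0 : Φ.coeff j = (n.choose (k + 1) : K) * a (k + 1) := by
      have := hcoeff j (by omega)
      rwa [show n - j = k + 1 by omega] at this
    rw [hc1, hc2, hc0, hδcmul] at E
    have hnK : (n : K) = (j : K) + 1 + (k : K) := by exact_mod_cast congrArg (Nat.cast : ℕ → K) hj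
    have hjK : (j : K) = (n : K) - 1 - (k : K) := by rw [hnK]; ring
    rw [hjK] at E
    have id1 : (n.choose (k + 1) : K) * ((k : K) + 1) = (n.choose k : K) * ((n : K) - (k : K)) := by
      have h := congrArg (Nat.cast : ℕ → K) (Nat.choose_succ_right_eq n k)
      push_cast [Nat.cast_sub (show k ≤ n by omega)] at h
      linear_combination h
    have id2 : (n.choose (k - 1) : K) * ((n : K) - (k : K) + 1) = (n.choose k : K) * (k : K) := by
      have h := Nat.choose_succ_right_eq n (k - 1)
      rw [show k - 1 + 1 = k by omega] at h
      have h' := congrArg (Nat.cast : ℕ → K) h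
      push_cast [Nat.cast_sub (show k - 1 ≤ n by omega),
        Nat.cast_sub (show 1 ≤ k from hk1)] at h'
      linear_combination -h'
    have hCk : (n.choose k : K) ≠ 0 :=
      Nat.cast_ne_zero.mpr (Nat.choose_pos (by omega)).ne'
    apply mul_left_cancel₀ hCk
    linear_combination E - a (k + 1) * id1 - q * a (k - 1) * id2
  refine ⟨hrec, ?_⟩
  intro L hδL h1 hq k
  induction k using Nat.strong_induction_on with
  | _ k ih =>
    intro hk
    match k with
    | 0 => rw [ha0]; exact L.one_mem
    | 1 => exact h1
    | (m + 2) =>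
      have hrec' := hrec (m + 1) (by omega) (by omega)
      have hne : ((n : K) - ((m + 1 : ℕ) : K)) ≠ 0 := by
        have h0 : ((n - (m + 1) : ℕ) : K) ≠ 0 := Nat.cast_ne_zero.mpr (by omega)
        rwa [Nat.cast_sub (by omega)] at h0
      have ha' : a (m + 2)
          = ((n : K) * a 1 * a (m + 1) - δ (a (m + 1)) - ((m + 1 : ℕ) : K) * a m * q)
            / ((n : K) - ((m + 1 : ℕ) : K)) := by
        rw [eq_div_iff hne]
        push_cast at hrec' ⊢
        linear_combination hrec'
      rw [ha']
      have ham1 : a (m + 1) ∈ L := ih (m + 1) (by omega) (by omega)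
      have ham : a m ∈ L := ih m (by omega) (by omega)
      exact L.div_mem
        (L.sub_mem
          (L.sub_mem (L.mul_mem (L.mul_mem (natCast_mem L n) h1) ham1) (hδL _ ham1))
          (L.mul_mem (L.mul_mem (natCast_mem L (m + 1)) ham) hq))
        (L.sub_mem (natCast_mem L n) (natCast_mem L (m + 1)))
end

section
/- Let Φ ∈ K[u] be monic of degree n with X(Φ) = n(a₁ − u)Φ for the derivation X = ∂/∂z + (q−u²)∂/∂u, and let H = nΦΦ'' − (n−1)(Φ')² (derivatives with respect to u). Then X(H) = 2(na₁ − nu + 2u)H, i.e., H is also a Darboux polynomial for X. -/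
open Polynomial

section Aux

variable {K : Type*} [Field K] (δ : K → K)
variable (hadd : ∀ a b : K, δ (a + b) = δ a + δ b)
variable (hmul : ∀ a b : K, δ (a * b) = a * δ b + δ a * b)

noncomputable def mapDer (f : Polynomial K) : Polynomial K :=
  f.sum (fun k c => C (δ c) * X ^ k)

theorem riccatiDer_eq (q : K) (f : Polynomial K) :
    riccatiDer δ q f = mapDer δ f + (C q - X ^ 2) * derivative f := rfl

include hadd in
theorem delta_zero : δ 0 = 0 := by
  have := hadd 0 0; simp at this; exact this

include hmul in
theorem delta_one : δ 1 = 0 := by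
  have := hmul 1 1; simp at this; exact this

include hadd hmul in
theorem delta_natCast (k : ℕ) : δ (k : K) = 0 := by
  induction k with
  | zero => simpa using delta_zero δ hadd
  | succ m ih => push_cast; rw [hadd, ih, delta_one δ hmul]; ring

include hadd in
theorem delta_neg (a : K) : δ (-a) = - δ a := by
  have h := hadd a (-a)
  simp [delta_zero δ hadd] at h
  linear_combination -h

include hadd in
theorem delta_sub (a b : K) : δ (a - b) = δ a - δ b := by
  rw [sub_eq_add_neg, hadd, delta_neg δ hadd]; ring

include hadd in
theorem mapDer_monomial (k : ℕ) (a : K) :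
    mapDer δ (monomial k a) = monomial k (δ a) := by
  unfold mapDer
  rw [sum_monomial_index]
  · rw [C_mul_X_pow_eq_monomial]
  · simp [delta_zero δ hadd]

include hadd in
theorem mapDer_add (f g : Polynomial K) :
    mapDer δ (f + g) = mapDer δ f + mapDer δ g := by
  unfold mapDer
  rw [sum_add_index]
  · intro i; simp [delta_zero δ hadd]
  · intro i b₁ b₂; rw [hadd, C_add]; ring

theorem mapDer_zero : mapDer δ (0 : Polynomial K) = 0 := by
  unfold mapDer; simp

include hadd in
theorem mapDer_neg (f : Polynomial K) : mapDer δ (-f) = - mapDer δ f := by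
  have h : mapDer δ (f + (-f)) = mapDer δ f + mapDer δ (-f) := mapDer_add δ hadd f (-f)
  simp [mapDer_zero] at h
  linear_combination -h

include hadd in
theorem mapDer_sub (f g : Polynomial K) :
    mapDer δ (f - g) = mapDer δ f - mapDer δ g := by
  rw [sub_eq_add_neg, mapDer_add δ hadd, mapDer_neg δ hadd]; ring

include hadd hmul in
theorem mapDer_mul (f g : Polynomial K) :
    mapDer δ (f * g) = f * mapDer δ g + mapDer δ f * g := by
  induction f using Polynomial.induction_on' with
  | add p q hp hq =>
    rw [add_mul, mapDer_add δ hadd, hp, hq, mapDer_add δ hadd]; ring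
  | monomial i a =>
    induction g using Polynomial.induction_on' with
    | add p q hp hq =>
      rw [mul_add, mapDer_add δ hadd, hp, hq, mapDer_add δ hadd]; ring
    | monomial j b =>
      simp only [monomial_mul_monomial, mapDer_monomial δ hadd, hmul, map_add]

include hadd hmul in
theorem mapDer_derivative (f : Polynomial K) :
    mapDer δ (derivative f) = derivative (mapDer δ f) := by
  induction f using Polynomial.induction_on' with
  | add p q hp hq =>
    rw [derivative_add, mapDer_add δ hadd, hp, hq, mapDer_add δ hadd, derivative_add]
  | monomial i a =>
    rw [derivative_monomial, mapDer_monomial δ hadd, mapDer_monomial δ hadd,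
      derivative_monomial]
    congr 1
    rw [hmul, delta_natCast δ hadd hmul]; ring

end Aux

section Ricc

variable {K : Type*} [Field K] (δ : K → K) (q : K)
variable (hadd : ∀ a b : K, δ (a + b) = δ a + δ b)
variable (hmul : ∀ a b : K, δ (a * b) = a * δ b + δ a * b)

include hadd in
theorem riccatiDer_sub (f g : Polynomial K) :
    riccatiDer δ q (f - g) = riccatiDer δ q f - riccatiDer δ q g := by
  simp only [riccatiDer_eq, mapDer_sub δ hadd, derivative_sub]; ring

include hadd hmul in
theorem riccatiDer_mul (f g : Polynomial K) :
    riccatiDer δ q (f * g) = f * riccatiDer δ q g + riccatiDer δ q f * g := by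
  simp only [riccatiDer_eq, mapDer_mul δ hadd hmul, derivative_mul]; ring

include hadd in
theorem riccatiDer_C (c : K) : riccatiDer δ q (C c) = C (δ c) := by
  have : (C c : Polynomial K) = monomial 0 c := by simp [monomial_zero_left]
  rw [riccatiDer_eq, this, mapDer_monomial δ hadd]
  simp [monomial_zero_left]

include hadd hmul in
theorem riccatiDer_derivative (f : Polynomial K) :
    riccatiDer δ q (derivative f) =
      derivative (riccatiDer δ q f) + 2 * X * derivative f := by
  simp only [riccatiDer_eq, mapDer_derivative δ hadd hmul, derivative_add,
    derivative_mul, derivative_sub, derivative_C, derivative_X_pow, Nat.cast_ofNat, map_ofNat]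
  ring

end Ricc

/-- If `Φ` is monic of degree `n` with `X(Φ) = n(a₁ − u)Φ`, then the Hessian
`H = nΦΦ'' − (n−1)(Φ')²` satisfies `X(H) = 2(na₁ − nu + 2u)H`, i.e. `H` is also
a Darboux polynomial for `X`. -/
theorem hessian_is_darboux
    {K : Type*} [Field K] [CharZero K]
    (δ : K → K)
    (hadd : ∀ a b : K, δ (a + b) = δ a + δ b)
    (hmul : ∀ a b : K, δ (a * b) = a * δ b + δ a * b)
    (q : K) (n : ℕ) (a1 : K)
    (Φ : Polynomial K) (hmonic : Φ.Monic) (hdeg : Φ.natDegree = n)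
    (hdar : riccatiDer δ q Φ = (C ((n : K) * a1) - C (n : K) * X) * Φ)
    (H : Polynomial K)
    (hH : H = C (n : K) * Φ * derivative (derivative Φ)
      - C ((n : K) - 1) * (derivative Φ) ^ 2) :
    riccatiDer δ q H = (C (2 * (n : K) * a1) + C (2 * (2 - (n : K))) * X) * H := by
  have hCn : riccatiDer δ q (C (n : K)) = 0 := by
    rw [riccatiDer_C δ q hadd, delta_natCast δ hadd hmul, C_0]
  have hCn1 : riccatiDer δ q (C ((n : K) - 1)) = 0 := by
    rw [riccatiDer_C δ q hadd, delta_sub δ hadd, delta_natCast δ hadd hmul,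
      delta_one δ hmul, sub_zero, C_0]
  have E1 : riccatiDer δ q (derivative Φ) =
      C (-(n : K)) * Φ + (C ((n : K) * a1) - C (n : K) * X + 2 * X) * derivative Φ := by
    rw [riccatiDer_derivative δ q hadd hmul, hdar]
    simp only [derivative_mul, derivative_sub, derivative_C, derivative_X, C_neg]
    ring
  have E2 : riccatiDer δ q (derivative (derivative Φ)) =
      C (-2 * ((n : K) - 1)) * derivative Φ +
        (C ((n : K) * a1) - C (n : K) * X + 4 * X) * derivative (derivative Φ) := by
    rw [riccatiDer_derivative δ q hadd hmul, E1]
    simp only [derivative_add, derivative_mul, derivative_sub, derivative_C,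
      derivative_X, derivative_neg, derivative_ofNat, C_neg, C_mul, C_sub, C_1, map_ofNat]
    ring
  rw [hH, sq, riccatiDer_sub δ q hadd, riccatiDer_mul δ q hadd hmul,
    riccatiDer_mul δ q hadd hmul, riccatiDer_mul δ q hadd hmul,
    riccatiDer_mul δ q hadd hmul, hCn, hCn1, hdar, E1, E2]
  simp only [C_mul, C_sub, C_neg, C_add, C_1, map_ofNat]
  ring
end

section
/- The degree-2 case is impossible: there is no monic irreducible quadratic Φ(u) = u² + 2a₁u + a₂ over K = ℂ(℘, ℘') with a₁ = 0 that is a Darboux polynomial for X = ∂/∂z + (q − u²)∂/∂u with cofactor −2u and whose Hessian H = 2ΦΦ'' − (Φ')² = 4a₂ − 4a₁² is a Darboux polynomial with cofactor 2(2a₁ − 2u + 2u); indeed, X(H) = 2(2a₁−2u+2u)H with a₁=0 forces a₂' = 0, hence a₂ ∈ ℂ, contradicting irreducibility of Φ over the algebraically closed constants ℂ. -/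
open Polynomial

/-- The degree-2 case is impossible: over a differential field whose constants
are exactly `ℂ`, there is no monic irreducible quadratic `Φ = u² + a₂`
(i.e. with `a₁ = 0`) that is a Darboux polynomial for
`X = ∂/∂z + (q − u²)∂/∂u` with cofactor `−2u` and whose Hessian `H = 4a₂` is a
Darboux polynomial with cofactor `0`: these conditions force `a₂' = 0`, hence
`a₂ ∈ ℂ`, contradicting irreducibility over the algebraically closed constants. -/
theorem no_degree_two_minimal_polynomial
    {K : Type*} [Field K] [Algebra ℂ K]
    (δ : K → K)
    (hadd : ∀ a b : K, δ (a + b) = δ a + δ b)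
    (hmul : ∀ a b : K, δ (a * b) = a * δ b + δ a * b)
    (hconst : ∀ x : K, δ x = 0 → ∃ c : ℂ, x = algebraMap ℂ K c)
    (q : K) :
    ¬ ∃ a₂ : K,
        Irreducible (X ^ 2 + C a₂ : Polynomial K) ∧
        riccatiDer δ q (X ^ 2 + C a₂) = C (-2 : K) * X * (X ^ 2 + C a₂) ∧
        riccatiDer δ q (C (4 * a₂)) = 0 := by
  rintro ⟨a₂, hirr, -, hH⟩
  -- δ 0 = 0
  have hδ0 : δ 0 = 0 := by
    have := hadd 0 0
    simpa using this
  -- compute riccatiDer on a constant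
  have hcomp : riccatiDer δ q (C (4 * a₂)) = C (δ (4 * a₂)) := by
    unfold riccatiDer
    rw [derivative_C, mul_zero, add_zero,
      Polynomial.sum_C_index (by simp [hδ0])]
    simp
  rw [hcomp] at hH
  have h4 : δ (4 * a₂) = 0 := by
    exact_mod_cast (C_eq_zero.mp hH)
  -- δ applied to 4*a₂ = a₂+a₂+a₂+a₂
  have hδa : δ a₂ = 0 := by
    have : (4 : K) * a₂ = a₂ + a₂ + a₂ + a₂ := by ring
    rw [this, hadd, hadd, hadd] at h4
    have hmul4 : (4 : K) * δ a₂ = 0 := by linear_combination h4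
    have : CharZero K := charZero_of_injective_algebraMap (algebraMap ℂ K).injective
    have h4ne : (4 : K) ≠ 0 := by norm_num
    exact (mul_eq_zero.mp hmul4).resolve_left h4ne
  obtain ⟨c, hc⟩ := hconst a₂ hδa
  obtain ⟨r, hr⟩ := IsAlgClosed.exists_pow_nat_eq (-c) (n := 2) (by norm_num)
  set s : K := algebraMap ℂ K r with hs
  have hs2 : s ^ 2 = -a₂ := by
    rw [hs, ← map_pow, hr, map_neg, hc]
  have hfac : (X ^ 2 + C a₂ : Polynomial K) = (X + C s) * (X - C s) := by
    have : C a₂ = - C s ^ 2 := by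
      rw [← C_pow, hs2]; simp
    rw [this]; ring
  rcases hirr.isUnit_or_isUnit hfac with h | h
  · have : X + C s = X - C (-s) := by simp [sub_neg_eq_add]
    rw [this] at h
    exact Polynomial.not_isUnit_X_sub_C _ h
  · exact Polynomial.not_isUnit_X_sub_C _ h
end
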